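/- arXiv:1612.02592 — 4 statements merged into one kernel-verified Lean document; each statement's English description precedes it below -/
import Mathlib

section
/- Let (X,ρ) be a compact metric space and ε > 0. Put η = 1/r(ε/2, X), where r(ε/2, X) is the smallest cardinality of an (ε/2)-spanning subset of X. Then for every continuous map f : X → X, every x ∈ X, and all m, n ∈ ℕ, the correlation sum satisfies C^f_m(x,n,ε) ≥ η^m; consequently ĉ^f_m(x,ε) ≥ č^f_m(x,ε) ≥ η^m. -/
open Filter Topology Set MeasureTheory

section Defs

variable {X : Type*} [MetricSpace X]

/-- Bowen's metric `ρ^f_m(y,z) = max_{0 ≤ i < m} ρ(f^i y, f^i z)`. -/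
noncomputable def bowenDist (f : X → X) (m : ℕ) (y z : X) : ℝ :=
  (((Finset.range m).sup fun i => nndist (f^[i] y) (f^[i] z)) : NNReal)

open scoped Classical in
/-- The correlation sum `C^f_m(x,n,ε)`. -/
noncomputable def corrSum (f : X → X) (m : ℕ) (x : X) (n : ℕ) (ε : ℝ) : ℝ :=
  (((Finset.range n ×ˢ Finset.range n).filter fun q =>
      bowenDist f m (f^[q.1] x) (f^[q.2] x) ≤ ε).card : ℝ) / (n : ℝ) ^ 2

/-- `ĉ^f_m(x,ε) = limsup_{n→∞} C^f_m(x,n,ε)`. -/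
noncomputable def corrUpper (f : X → X) (m : ℕ) (x : X) (ε : ℝ) : ℝ :=
  Filter.limsup (fun n : ℕ => corrSum f m x n ε) Filter.atTop

/-- `č^f_m(x,ε) = liminf_{n→∞} C^f_m(x,n,ε)`. -/
noncomputable def corrLower (f : X → X) (m : ℕ) (x : X) (ε : ℝ) : ℝ :=
  Filter.liminf (fun n : ℕ => corrSum f m x n ε) Filter.atTop

/-- The upper local correlation entropy `entr⁺(f,x) = lim_{ε→0⁺} limsup_m (−1/m) log č^f_m(x,ε)`;
the limit as `ε → 0⁺` exists by monotonicity in `ε`, and is expressed here as a `limsup`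
along `𝓝[>] 0` (with values in `EReal`). -/
noncomputable def entrUpper (f : X → X) (x : X) : EReal :=
  Filter.limsup (fun ε : ℝ =>
      Filter.limsup (fun m : ℕ => ((-(1 / (m : ℝ)) * Real.log (corrLower f m x ε) : ℝ) : EReal))
        Filter.atTop)
    (𝓝[>] (0 : ℝ))

/-- The lower local correlation entropy `entr⁻(f,x) = lim_{ε→0⁺} liminf_m (−1/m) log ĉ^f_m(x,ε)`. -/
noncomputable def entrLower (f : X → X) (x : X) : EReal :=
  Filter.limsup (fun ε : ℝ =>
      Filter.liminf (fun m : ℕ => ((-(1 / (m : ℝ)) * Real.log (corrUpper f m x ε) : ℝ) : EReal))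
        Filter.atTop)
    (𝓝[>] (0 : ℝ))

/-- `r_m(ε,K)`: the smallest cardinality of a subset of `K` which `(m,ε)`-spans `K`. -/
noncomputable def spanNumOn (f : X → X) (K : Set X) (m : ℕ) (ε : ℝ) : ℕ :=
  sInf {k : ℕ | ∃ A : Finset X, ↑A ⊆ K ∧ A.card = k ∧ ∀ y ∈ K, ∃ a ∈ A, bowenDist f m y a ≤ ε}

/-- Bowen's topological entropy of `f` on `K` (for `K = univ`, of `f` itself;
for closed invariant `K`, of the restriction of `f` to `K`). -/
noncomputable def topEntropyOn (f : X → X) (K : Set X) : EReal :=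
  Filter.limsup (fun ε : ℝ =>
      Filter.limsup (fun n : ℕ => (((1 / (n : ℝ)) * Real.log (spanNumOn f K n ε) : ℝ) : EReal))
        Filter.atTop)
    (𝓝[>] (0 : ℝ))

end Defs

/-- `r(ε,X)`: the smallest cardinality of an `ε`-spanning subset of `X`. -/
noncomputable def spanNum (X : Type*) [MetricSpace X] (ε : ℝ) : ℕ :=
  sInf {k : ℕ | ∃ A : Finset X, A.card = k ∧ ∀ y : X, ∃ a ∈ A, dist y a ≤ ε}

/-!
Cover `X` by `r = r(ε/2, X)` points and code each orbit point `fⁱ x` by the itinerary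
`k ↦ (a point of the cover within ε/2 of f^(i+k) x)`, `k < m`, a word among `r ^ m` possible
ones. Two times with the same code are `ε`-close in Bowen's metric, and by Cauchy–Schwarz at least
`n² / r ^ m` of the `n²` pairs of times below `n` share their code.
-/

open Finset

theorem Finset.sq_card_le_card_mul_card_filter_eq {ι M : Type*} [DecidableEq M]
    {s : Finset ι} {t : Finset M} {g : ι → M} (hg : ∀ i ∈ s, g i ∈ t) :
    #s ^ 2 ≤ #t * #{q ∈ s ×ˢ s | g q.1 = g q.2} := by
  have hfiber : #{q ∈ s ×ˢ s | g q.1 = g q.2} = ∑ c ∈ t, #{i ∈ s | g i = c} ^ 2 := by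
    rw [card_eq_sum_card_fiberwise (f := fun q : ι × ι => g q.1)
      fun q hq => hg q.1 (mem_product.1 (mem_filter.1 hq).1).1]
    refine sum_congr rfl fun c _ => ?_
    rw [sq, ← card_product]
    congr 1
    ext ⟨i, j⟩
    simp only [mem_filter, mem_product]
    constructor
    · rintro ⟨⟨⟨hi, hj⟩, hij⟩, rfl⟩
      exact ⟨⟨hi, rfl⟩, hj, hij.symm⟩
    · rintro ⟨⟨hi, rfl⟩, hj, hji⟩
      exact ⟨⟨⟨hi, hj⟩, hji.symm⟩, rfl⟩
  rw [hfiber, card_eq_sum_card_fiberwise hg]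
  exact sq_sum_le_card_mul_sum_sq

section CorrelationSum

variable {X : Type*} [MetricSpace X]

theorem bowenDist_le_iff {f : X → X} {m : ℕ} {y z : X} {ε : ℝ} (hε : 0 ≤ ε) :
    bowenDist f m y z ≤ ε ↔ ∀ k < m, dist (f^[k] y) (f^[k] z) ≤ ε := by
  rw [bowenDist, ← Real.coe_toNNReal ε hε, NNReal.coe_le_coe, Finset.sup_le_iff]
  simp only [Finset.mem_range, ← NNReal.coe_le_coe, coe_nndist]

theorem bowenDist_iterate_le_of_near_eq {f : X → X} {m : ℕ} {x : X} {ε : ℝ} {near : X → X}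
    (hnear : ∀ y, dist y (near y) ≤ ε / 2) {i j : ℕ}
    (hij : ∀ k < m, near (f^[k + i] x) = near (f^[k + j] x)) :
    bowenDist f m (f^[i] x) (f^[j] x) ≤ ε := by
  have hε : 0 ≤ ε := by linarith [dist_nonneg.trans (hnear x)]
  refine (bowenDist_le_iff hε).2 fun k hk => ?_
  rw [← Function.iterate_add_apply, ← Function.iterate_add_apply]
  calc dist (f^[k + i] x) (f^[k + j] x)
      ≤ dist (f^[k + i] x) (near (f^[k + i] x)) + dist (f^[k + j] x) (near (f^[k + j] x)) := by
        rw [hij k hk]; exact dist_triangle_right _ _ _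
    _ ≤ ε / 2 + ε / 2 := add_le_add (hnear _) (hnear _)
    _ = ε := add_halves ε

theorem corrSum_nonneg (f : X → X) (m : ℕ) (x : X) (n : ℕ) (ε : ℝ) :
    0 ≤ corrSum f m x n ε := by
  unfold corrSum; positivity

theorem corrSum_le_one (f : X → X) (m : ℕ) (x : X) (n : ℕ) (ε : ℝ) :
    corrSum f m x n ε ≤ 1 := by
  unfold corrSum
  refine div_le_one_of_le₀ ?_ (by positivity)
  calc _ ≤ (#(range n ×ˢ range n) : ℝ) := by gcongr; exact filter_subset _ _
    _ = (n : ℝ) ^ 2 := by simp [sq]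

theorem one_div_card_pow_le_corrSum {A : Finset X} {ε : ℝ} (hA : ∀ y, ∃ a ∈ A, dist y a ≤ ε / 2)
    (f : X → X) (m : ℕ) (x : X) {n : ℕ} (hn : 0 < n) :
    (1 / (#A : ℝ)) ^ m ≤ corrSum f m x n ε := by
  classical
  choose near hnearA hnear using hA
  let code : ℕ → Fin m → X := fun i k => near (f^[k + i] x)
  have hcount := sq_card_le_card_mul_card_filter_eq (s := range n)
    (t := Fintype.piFinset fun _ : Fin m => A) (g := code)
    fun i _ => Fintype.mem_piFinset.2 fun k => hnearA _
  rw [Fintype.card_piFinset_const, card_range] at hcount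
  have hclose : {q ∈ range n ×ˢ range n | code q.1 = code q.2} ⊆
      {q ∈ range n ×ˢ range n | bowenDist f m (f^[q.1] x) (f^[q.2] x) ≤ ε} :=
    monotone_filter_right _ fun q _ hq =>
      bowenDist_iterate_le_of_near_eq hnear fun k hk => congrFun hq ⟨k, hk⟩
  have hA : 0 < #A := card_pos.2 ⟨_, hnearA x⟩
  rw [corrSum, one_div_pow, div_le_div_iff₀ (by positivity) (by positivity), one_mul, mul_comm]
  exact_mod_cast hcount.trans (Nat.mul_le_mul_left _ (card_le_card hclose))

end CorrelationSum

theorem exists_card_eq_spanNum (X : Type*) [MetricSpace X] [CompactSpace X] {ε : ℝ}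
    (hε : 0 < ε) : ∃ A : Finset X, #A = spanNum X ε ∧ ∀ y, ∃ a ∈ A, dist y a ≤ ε := by
  refine Nat.sInf_mem (s := {k | ∃ A : Finset X, #A = k ∧ ∀ y, ∃ a ∈ A, dist y a ≤ ε}) ?_
  obtain ⟨A, -, hA⟩ := isCompact_univ.elim_nhds_subcover (fun x : X => Metric.ball x ε)
    fun x _ => Metric.ball_mem_nhds x hε
  refine ⟨#A, A, rfl, fun y => ?_⟩
  obtain ⟨a, ha, hya⟩ := mem_iUnion₂.1 (hA (mem_univ y))
  exact ⟨a, ha, (Metric.mem_ball.1 hya).le⟩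

/-- For a compact metric space `X` and `ε > 0`, with `η = 1/r(ε/2,X)`: for every continuous
`f : X → X`, `x ∈ X` and `m, n ∈ ℕ`, `C^f_m(x,n,ε) ≥ η^m`; consequently
`ĉ^f_m(x,ε) ≥ č^f_m(x,ε) ≥ η^m`. -/
theorem corrSum_ge_eta_pow {X : Type*} [MetricSpace X] [CompactSpace X] (ε : ℝ) (hε : 0 < ε)
    (η : ℝ) (hη : η = 1 / (spanNum X (ε / 2) : ℝ)) :
    ∀ f : X → X, Continuous f → ∀ (x : X) (m : ℕ), 0 < m →
      (∀ n : ℕ, 0 < n → η ^ m ≤ corrSum f m x n ε) ∧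
      η ^ m ≤ corrLower f m x ε ∧ corrLower f m x ε ≤ corrUpper f m x ε := by
  intro f _ x m _
  obtain ⟨A, hAcard, hA⟩ := exists_card_eq_spanNum X (half_pos hε)
  have hbound : ∀ n : ℕ, 0 < n → η ^ m ≤ corrSum f m x n ε := fun n hn => by
    rw [hη, ← hAcard]
    exact one_div_card_pow_le_corrSum hA f m x hn
  have hbdd_above : IsBoundedUnder (· ≤ ·) atTop fun n => corrSum f m x n ε :=
    isBoundedUnder_of ⟨1, fun n => corrSum_le_one f m x n ε⟩
  have hbdd_below : IsBoundedUnder (· ≥ ·) atTop fun n => corrSum f m x n ε :=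
    isBoundedUnder_of ⟨0, fun n => corrSum_nonneg f m x n ε⟩
  refine ⟨hbound, ?_, liminf_le_limsup hbdd_above hbdd_below⟩
  exact le_liminf_of_le hbdd_above.isCoboundedUnder_ge
    (eventually_gt_atTop 0 |>.mono hbound)
end

section
/- Let (X,ρ) be a compact metric space, f : X → X continuous, m ∈ ℕ, ε > 0, and x ∈ X. Let (n_j)_{j≥1} be an increasing sequence of positive integers with n_{j+1}/n_j → 1 as j → ∞. Then ĉ^f_m(x,ε) = limsup_{j→∞} C^f_m(x, n_j, ε) and č^f_m(x,ε) = liminf_{j→∞} C^f_m(x, n_j, ε). -/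
open Filter Topology Set MeasureTheory

/-! The correlation sum is the density of a set of pairs in the square `[0, n)²`. Enlarging the
square from `[0, p)²` to `[0, n)²` adds only `n² - p²` pairs, so the density moves by at most
`1 - (p / n)²`. Comparing each `n` with the last `a j ≤ n` bounds this by `1 - (a j / a (j + 1))²`,
which tends to `0` by the ratio hypothesis; hence the full sequence stays asymptotically close to a
step function taking the values of the subsequence, and both have the same `limsup` and `liminf`. -/

section LimsupAddTendstoZero

variable {ι : Type*} {l : Filter ι} [l.NeBot] {u v : ι → ℝ}

theorem limsup_add_of_tendsto_zero (hu₁ : IsBoundedUnder (· ≤ ·) l u)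
    (hu₂ : IsBoundedUnder (· ≥ ·) l u) (hv : Tendsto v l (𝓝 0)) :
    limsup (u + v) l = limsup u l := by
  refine le_antisymm ?_ ?_
  · simpa [hv.limsup_eq] using limsup_add_le hu₂ hu₁ hv.isBoundedUnder_ge.isCoboundedUnder_le
      hv.isBoundedUnder_le
  · simpa [hv.liminf_eq] using le_limsup_add hu₁ hu₂.isCoboundedUnder_le hv.isBoundedUnder_le
      hv.isBoundedUnder_ge

theorem liminf_add_of_tendsto_zero (hu₁ : IsBoundedUnder (· ≤ ·) l u)
    (hu₂ : IsBoundedUnder (· ≥ ·) l u) (hv : Tendsto v l (𝓝 0)) :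
    liminf (u + v) l = liminf u l := by
  refine le_antisymm ?_ ?_
  · have hnv : Tendsto (-v) l (𝓝 0) := neg_zero (G := ℝ) ▸ hv.neg
    simpa [hnv.liminf_eq] using le_liminf_add (isBoundedUnder_ge_add hu₂ hv.isBoundedUnder_ge)
      (isBoundedUnder_le_add hu₁ hv.isBoundedUnder_le) hnv.isBoundedUnder_ge
      hnv.isBoundedUnder_le.isCoboundedUnder_ge
  · simpa [hv.liminf_eq] using le_liminf_add hu₂ hu₁ hv.isBoundedUnder_ge
      hv.isBoundedUnder_le.isCoboundedUnder_ge

theorem limsup_eq_of_tendsto_sub (hv₁ : IsBoundedUnder (· ≤ ·) l v)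
    (hv₂ : IsBoundedUnder (· ≥ ·) l v) (h : Tendsto (u - v) l (𝓝 0)) :
    limsup u l = limsup v l := by
  simpa using limsup_add_of_tendsto_zero hv₁ hv₂ h

theorem liminf_eq_of_tendsto_sub (hv₁ : IsBoundedUnder (· ≤ ·) l v)
    (hv₂ : IsBoundedUnder (· ≥ ·) l v) (h : Tendsto (u - v) l (𝓝 0)) :
    liminf u l = liminf v l := by
  simpa using liminf_add_of_tendsto_zero hv₁ hv₂ h

end LimsupAddTendstoZero

/-- The largest `j` with `a j ≤ n`, or `0` if there is none. -/
def floorIndex (a : ℕ → ℕ) (n : ℕ) : ℕ :=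
  Nat.findGreatest (fun j => a j ≤ n) n

section FloorIndex

variable {a : ℕ → ℕ} {n : ℕ}

theorem apply_floorIndex_le (hn : a 0 ≤ n) : a (floorIndex a n) ≤ n :=
  Nat.findGreatest_spec (P := fun j => a j ≤ n) (Nat.zero_le n) hn

theorem le_floorIndex (ha : StrictMono a) {j : ℕ} (hj : a j ≤ n) : j ≤ floorIndex a n :=
  Nat.le_findGreatest (ha.id_le j |>.trans hj) hj

theorem lt_apply_floorIndex_succ (ha : StrictMono a) : n < a (floorIndex a n + 1) := by
  by_contra! h
  exact (le_floorIndex ha h).not_gt (Nat.lt_succ_self _)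

theorem floorIndex_apply (ha : StrictMono a) (j : ℕ) : floorIndex a (a j) = j :=
  le_antisymm (ha.le_iff_le.mp (apply_floorIndex_le (ha.monotone (Nat.zero_le j))))
    (le_floorIndex ha le_rfl)

theorem tendsto_floorIndex_atTop (ha : StrictMono a) : Tendsto (floorIndex a) atTop atTop :=
  tendsto_atTop.2 fun j => (eventually_ge_atTop (a j)).mono fun _ => le_floorIndex ha

theorem map_floorIndex_atTop (ha : StrictMono a) : map (floorIndex a) atTop = atTop := by
  refine le_antisymm (tendsto_floorIndex_atTop ha) ?_
  calc atTop = map (floorIndex a ∘ a) atTop := by simp [Function.comp_def, floorIndex_apply ha]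
    _ ≤ map (floorIndex a) atTop := by rw [← map_map]; exact map_mono ha.tendsto_atTop

end FloorIndex

theorem limsup_liminf_comp_eq_of_tendsto_sub_floorIndex {u : ℕ → ℝ} {a : ℕ → ℕ}
    (ha : StrictMono a) (hu₁ : BddAbove (range u)) (hu₂ : BddBelow (range u))
    (h : Tendsto (fun n => u n - u (a (floorIndex a n))) atTop (𝓝 0)) :
    limsup u atTop = limsup (u ∘ a) atTop ∧ liminf u atTop = liminf (u ∘ a) atTop := by
  have hw₁ : BddAbove (range ((u ∘ a) ∘ floorIndex a)) :=
    hu₁.mono (range_comp_subset_range (a ∘ floorIndex a) u)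
  have hw₂ : BddBelow (range ((u ∘ a) ∘ floorIndex a)) :=
    hu₂.mono (range_comp_subset_range (a ∘ floorIndex a) u)
  constructor
  · calc limsup u atTop = limsup ((u ∘ a) ∘ floorIndex a) atTop :=
          limsup_eq_of_tendsto_sub hw₁.isBoundedUnder_of_range hw₂.isBoundedUnder_of_range h
      _ = limsup (u ∘ a) atTop := by rw [limsup_comp (u ∘ a), map_floorIndex_atTop ha]
  · calc liminf u atTop = liminf ((u ∘ a) ∘ floorIndex a) atTop :=
          liminf_eq_of_tendsto_sub hw₁.isBoundedUnder_of_range hw₂.isBoundedUnder_of_range h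
      _ = liminf (u ∘ a) atTop := by rw [liminf_comp (u ∘ a), map_floorIndex_atTop ha]

theorem abs_div_sq_sub_div_sq_le {c d p n : ℝ} (hp : 0 ≤ p) (hpn : p ≤ n) (hd : 0 ≤ d)
    (hdp : d ≤ p ^ 2) (hdc : d ≤ c) (hc : c + p ^ 2 ≤ d + n ^ 2) :
    |c / n ^ 2 - d / p ^ 2| ≤ 1 - (p / n) ^ 2 := by
  rcases hp.eq_or_lt with rfl | hp
  · obtain rfl : d = 0 := le_antisymm (by simpa using hdp) hd
    simpa [abs_of_nonneg (div_nonneg hdc (sq_nonneg n))] using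
      div_le_one_of_le₀ (by simpa using hc) (sq_nonneg n)
  have hn : 0 < n := hp.trans_le hpn
  have hpn2 : 0 ≤ n ^ 2 - p ^ 2 := sub_nonneg.2 (pow_le_pow_left₀ hp.le hpn 2)
  have lower : c / n ^ 2 - d / p ^ 2 + (1 - (p / n) ^ 2)
      = (p ^ 2 * (c - d) + (n ^ 2 - p ^ 2) * (p ^ 2 - d)) / (n ^ 2 * p ^ 2) := by
    field_simp; ring
  have upper : 1 - (p / n) ^ 2 - (c / n ^ 2 - d / p ^ 2)
      = (p ^ 2 * (d + n ^ 2 - p ^ 2 - c) + d * (n ^ 2 - p ^ 2)) / (n ^ 2 * p ^ 2) := by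
    field_simp; ring
  have hlower : 0 ≤ c / n ^ 2 - d / p ^ 2 + (1 - (p / n) ^ 2) := by
    rw [lower]
    exact div_nonneg (add_nonneg (mul_nonneg (sq_nonneg p) (sub_nonneg.2 hdc))
      (mul_nonneg hpn2 (sub_nonneg.2 hdp))) (by positivity)
  have hupper : 0 ≤ 1 - (p / n) ^ 2 - (c / n ^ 2 - d / p ^ 2) := by
    rw [upper]
    exact div_nonneg (add_nonneg (mul_nonneg (sq_nonneg p) (by linarith)) (mul_nonneg hd hpn2))
      (by positivity)
  rw [abs_le]
  constructor <;> linarith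

section PairDensity

variable (P : ℕ × ℕ → Prop) [DecidablePred P]

noncomputable def pairDensity (n : ℕ) : ℝ :=
  (((Finset.range n ×ˢ Finset.range n).filter P).card : ℝ) / (n : ℝ) ^ 2

theorem card_filter_range_prod_le_sq (n : ℕ) :
    ((Finset.range n ×ˢ Finset.range n).filter P).card ≤ n ^ 2 :=
  (Finset.card_filter_le _ _).trans_eq (by simp [sq])

theorem card_filter_range_prod_mono {p n : ℕ} (h : p ≤ n) :
    ((Finset.range p ×ˢ Finset.range p).filter P).card
      ≤ ((Finset.range n ×ˢ Finset.range n).filter P).card :=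
  Finset.card_le_card (Finset.filter_subset_filter _ (Finset.product_subset_product
    (Finset.range_subset_range.2 h) (Finset.range_subset_range.2 h)))

theorem card_filter_range_prod_add_sq_le {p n : ℕ} (h : p ≤ n) :
    ((Finset.range n ×ˢ Finset.range n).filter P).card + p ^ 2
      ≤ ((Finset.range p ×ˢ Finset.range p).filter P).card + n ^ 2 := by
  set S : ℕ → Finset (ℕ × ℕ) := fun k => Finset.range k ×ˢ Finset.range k
  have hS : S p ⊆ S n := Finset.product_subset_product
    (Finset.range_subset_range.2 h) (Finset.range_subset_range.2 h)
  have hcard : ∀ k, (S k).card = k ^ 2 := fun k => by simp [S, sq]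
  have hsplit : (S n).filter P ⊆ (S p).filter P ∪ (S n \ S p) := by
    intro q hq
    by_cases hqp : q ∈ S p
    · exact Finset.mem_union_left _ (Finset.mem_filter.2 ⟨hqp, (Finset.mem_filter.1 hq).2⟩)
    · exact Finset.mem_union_right _ (Finset.mem_sdiff.2 ⟨(Finset.mem_filter.1 hq).1, hqp⟩)
  calc ((S n).filter P).card + p ^ 2
        ≤ ((S p).filter P).card + (S n \ S p).card + (S p).card := by
        rw [hcard p]
        gcongr
        exact (Finset.card_le_card hsplit).trans (Finset.card_union_le _ _)
    _ = ((S p).filter P).card + n ^ 2 := by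
        rw [add_assoc, Finset.card_sdiff_add_card_eq_card hS, hcard n]

theorem abs_pairDensity_sub_le {p n : ℕ} (h : p ≤ n) :
    |pairDensity P n - pairDensity P p| ≤ 1 - ((p : ℝ) / n) ^ 2 :=
  abs_div_sq_sub_div_sq_le (Nat.cast_nonneg p) (Nat.cast_le.2 h) (Nat.cast_nonneg _)
    (by exact_mod_cast card_filter_range_prod_le_sq P p)
    (by exact_mod_cast card_filter_range_prod_mono P h)
    (by exact_mod_cast card_filter_range_prod_add_sq_le P h)

theorem pairDensity_nonneg (n : ℕ) : 0 ≤ pairDensity P n := by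
  unfold pairDensity; positivity

theorem pairDensity_le_one (n : ℕ) : pairDensity P n ≤ 1 :=
  div_le_one_of_le₀ (by exact_mod_cast card_filter_range_prod_le_sq P n) (sq_nonneg _)

end PairDensity

theorem tendsto_pairDensity_sub_floorIndex (P : ℕ × ℕ → Prop) [DecidablePred P]
    {a : ℕ → ℕ} (ha : StrictMono a)
    (hratio : Tendsto (fun j => (a (j + 1) : ℝ) / a j) atTop (𝓝 1)) :
    Tendsto (fun n => pairDensity P n - pairDensity P (a (floorIndex a n))) atTop (𝓝 0) := by
  have hinv : Tendsto (fun j => (a j : ℝ) / a (j + 1)) atTop (𝓝 1) := by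
    simpa [inv_div] using hratio.inv₀ one_ne_zero
  have hgap : Tendsto (fun j => 1 - ((a j : ℝ) / a (j + 1)) ^ 2) atTop (𝓝 0) := by
    simpa using (hinv.pow 2).const_sub 1
  refine squeeze_zero_norm' ?_ (hgap.comp (tendsto_floorIndex_atTop ha))
  filter_upwards [eventually_ge_atTop (a 0), eventually_gt_atTop 0] with n h0 hn
  refine (abs_pairDensity_sub_le P (apply_floorIndex_le h0)).trans ?_
  have hn' : (0 : ℝ) < n := Nat.cast_pos.2 hn
  have hlt : (n : ℝ) ≤ a (floorIndex a n + 1) := Nat.cast_le.2 (lt_apply_floorIndex_succ ha).le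
  dsimp only [Function.comp_apply]
  gcongr

theorem corrUpper_corrLower_via_subsequence_general {X : Type*} [MetricSpace X]
    (f : X → X) (m : ℕ) (ε : ℝ) (x : X)
    (a : ℕ → ℕ) (hmono : StrictMono a)
    (hratio : Filter.Tendsto (fun j : ℕ => (a (j + 1) : ℝ) / (a j : ℝ)) Filter.atTop (𝓝 1)) :
    corrUpper f m x ε = Filter.limsup (fun j : ℕ => corrSum f m x (a j) ε) Filter.atTop ∧
    corrLower f m x ε = Filter.liminf (fun j : ℕ => corrSum f m x (a j) ε) Filter.atTop := by
  classical
  -- `corrSum f m x n ε` is `pairDensity P n` by definition.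
  set P : ℕ × ℕ → Prop := fun q => bowenDist f m (f^[q.1] x) (f^[q.2] x) ≤ ε
  exact limsup_liminf_comp_eq_of_tendsto_sub_floorIndex hmono
    ⟨1, forall_mem_range.2 (pairDensity_le_one P)⟩
    ⟨0, forall_mem_range.2 (pairDensity_nonneg P)⟩
    (tendsto_pairDensity_sub_floorIndex P hmono hratio)

/-- If `(n_j)` is an increasing sequence of positive integers with `n_{j+1}/n_j → 1`, then
`ĉ^f_m(x,ε) = limsup_j C^f_m(x,n_j,ε)` and `č^f_m(x,ε) = liminf_j C^f_m(x,n_j,ε)`. -/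
theorem corrUpper_corrLower_via_subsequence {X : Type*} [MetricSpace X] [CompactSpace X]
    (f : X → X) (hf : Continuous f) (m : ℕ) (hm : 0 < m) (ε : ℝ) (hε : 0 < ε) (x : X)
    (a : ℕ → ℕ) (hpos : ∀ j, 0 < a j) (hmono : StrictMono a)
    (hratio : Filter.Tendsto (fun j : ℕ => (a (j + 1) : ℝ) / (a j : ℝ)) Filter.atTop (𝓝 1)) :
    corrUpper f m x ε = Filter.limsup (fun j : ℕ => corrSum f m x (a j) ε) Filter.atTop ∧
    corrLower f m x ε = Filter.liminf (fun j : ℕ => corrSum f m x (a j) ε) Filter.atTop :=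
  corrUpper_corrLower_via_subsequence_general f m ε x a hmono hratio
end

section
/- Let (X,ρ) be a compact metric space, f : X → X continuous, and 0 ≤ h < k integers with k ≥ 1. Then for every ε > 0 there is η(ε) > 0 such that η(ε) → 0 as ε → 0⁺, and C^{f^k}_m(f^h(x), n, ε) ≤ C^{f^k}_m(x, n+1, η(ε)) + 3/n for every x ∈ X and all m, n ∈ ℕ. -/
open Filter Topology Set MeasureTheory

lemma bowenDist_le_of {X : Type*} [MetricSpace X] {f : X → X} {m : ℕ} {y z : X} {c : ℝ}
    (hc : 0 ≤ c) (H : ∀ i < m, dist (f^[i] y) (f^[i] z) ≤ c) : bowenDist f m y z ≤ c := by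
  unfold bowenDist
  rw [← Real.coe_toNNReal c hc, NNReal.coe_le_coe]
  apply Finset.sup_le
  intro i hi
  rw [← NNReal.coe_le_coe, Real.coe_toNNReal c hc, coe_nndist]
  exact H i (Finset.mem_range.mp hi)

lemma dist_le_bowenDist {X : Type*} [MetricSpace X] {f : X → X} {m i : ℕ} {y z : X}
    (hi : i < m) : dist (f^[i] y) (f^[i] z) ≤ bowenDist f m y z := by
  unfold bowenDist
  rw [dist_nndist]
  exact_mod_cast Finset.le_sup (f := fun i => nndist (f^[i] y) (f^[i] z))
    (Finset.mem_range.mpr hi)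

/-- For `0 ≤ h < k` there is a function `η` with `η(ε) > 0`, `η(ε) → 0` as `ε → 0⁺`, and
`C^{f^k}_m(f^h(x),n,ε) ≤ C^{f^k}_m(x,n+1,η(ε)) + 3/n` for all `x`, `m`, `n`. -/
theorem corrSum_iterate_point_bound {X : Type*} [MetricSpace X] [CompactSpace X]
    (f : X → X) (hf : Continuous f) (h k : ℕ) (hhk : h < k) (hk : 1 ≤ k) :
    ∃ η : ℝ → ℝ, (∀ ε : ℝ, 0 < ε → 0 < η ε) ∧
      Filter.Tendsto η (𝓝[>] (0 : ℝ)) (𝓝 0) ∧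
      ∀ ε : ℝ, 0 < ε → ∀ (x : X) (m n : ℕ), 0 < m → 0 < n →
        corrSum (f^[k]) m (f^[h] x) n ε ≤
          corrSum (f^[k]) m x (n + 1) (η ε) + 3 / (n : ℝ) := by
  classical
  rcases isEmpty_or_nonempty X with hX | hX
  · refine ⟨id, fun ε hε => hε, tendsto_id.mono_left nhdsWithin_le_nhds, ?_⟩
    intro ε hε x
    exact (IsEmpty.false x).elim
  obtain ⟨x0⟩ := hX
  set g : X → X := f^[k - h] with hg_def
  have hg : Continuous g := hf.iterate _
  have hgc : Continuous fun p : X × X => dist (g p.1) (g p.2) :=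
    (hg.comp continuous_fst).dist (hg.comp continuous_snd)
  have hbdd : BddAbove (Set.range fun p : X × X => dist (g p.1) (g p.2)) := by
    rw [← Set.image_univ]
    exact (isCompact_univ.image hgc).bddAbove
  set D : ℝ → ℝ := fun ε =>
    sSup ((fun p : X × X => dist (g p.1) (g p.2)) '' {p | dist p.1 p.2 ≤ ε}) with hD_def
  have hbdd' : ∀ ε : ℝ,
      BddAbove ((fun p : X × X => dist (g p.1) (g p.2)) '' {p | dist p.1 p.2 ≤ ε}) :=
    fun ε => hbdd.mono (Set.image_subset_range _ _)
  have hDle : ∀ ε : ℝ, ∀ a b : X, dist a b ≤ ε → dist (g a) (g b) ≤ D ε :=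
    fun ε a b hab => le_csSup (hbdd' ε) ⟨(a, b), hab, rfl⟩
  have hDnonneg : ∀ ε : ℝ, 0 ≤ ε → 0 ≤ D ε := by
    intro ε hε
    have := hDle ε x0 x0 (by simpa using hε)
    simpa using this
  have hDub : ∀ ε d : ℝ, 0 ≤ ε → (∀ a b : X, dist a b ≤ ε → dist (g a) (g b) ≤ d) →
      D ε ≤ d := by
    intro ε d hε hub
    have hne : ((fun p : X × X => dist (g p.1) (g p.2)) '' {p | dist p.1 p.2 ≤ ε}).Nonempty :=
      ⟨dist (g x0) (g x0), ⟨(x0, x0), by simpa using hε, rfl⟩⟩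
    apply csSup_le hne
    rintro r ⟨⟨a, b⟩, hab, rfl⟩
    exact hub a b hab
  have hunif : UniformContinuous g := CompactSpace.uniformContinuous_of_continuous hg
  refine ⟨fun ε => ε + D ε, ?_, ?_, ?_⟩
  · intro ε hε
    have := hDnonneg ε hε.le
    show 0 < ε + D ε
    linarith
  · rw [Metric.tendsto_nhdsWithin_nhds]
    intro δ hδ
    obtain ⟨ε0, hε0, hmod⟩ := Metric.uniformContinuous_iff.mp hunif (δ / 3) (by linarith)
    refine ⟨min (ε0 / 2) (δ / 3), by positivity, ?_⟩
    intro ε hε hdist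
    have hεpos : 0 < ε := hε
    rw [Real.dist_eq, abs_sub_lt_iff] at hdist
    have hε1 : ε < ε0 / 2 := by simpa using lt_of_lt_of_le (by linarith [hdist.1]) (min_le_left _ _)
    have hε2 : ε < δ / 3 := lt_of_lt_of_le (by linarith [hdist.1]) (min_le_right _ _)
    have hDδ : D ε ≤ δ / 3 := by
      apply hDub ε (δ / 3) hεpos.le
      intro a b hab
      exact (hmod (lt_of_le_of_lt hab (by linarith))).le
    have h0 : 0 ≤ D ε := hDnonneg ε hεpos.le
    rw [Real.dist_eq, sub_zero, abs_of_nonneg (by linarith)]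
    linarith
  · intro ε hε x m n hm hn
    set η := ε + D ε with hη_def
    have hηpos : 0 < η := by have := hDnonneg ε hε.le; simp only [hη_def]; linarith
    -- key iteration identities
    have key : ∀ (y : X) (i : ℕ), (f^[k])^[i + 1] y = g ((f^[k])^[i] (f^[h] y)) := by
      intro y i
      simp only [hg_def, ← Function.iterate_mul, ← Function.iterate_add_apply]
      congr 1
      rw [Nat.mul_add, Nat.mul_one]
      omega
    have hcomm : ∀ (y : X) (i : ℕ), (f^[k])^[i] (g y) = g ((f^[k])^[i] y) := by
      intro y i
      simp only [hg_def, ← Function.iterate_mul, ← Function.iterate_add_apply]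
      congr 1
      omega
    have step : ∀ y z : X, bowenDist (f^[k]) m y z ≤ ε →
        bowenDist (f^[k]) m (g y) (g z) ≤ η := by
      intro y z hyz
      apply bowenDist_le_of hηpos.le
      intro i hi
      rw [hcomm y i, hcomm z i]
      have h1 : dist ((f^[k])^[i] y) ((f^[k])^[i] z) ≤ ε :=
        le_trans (dist_le_bowenDist hi) hyz
      have := hDle ε _ _ h1
      simp only [hη_def]
      linarith
    -- counting
    set A := (Finset.range n ×ˢ Finset.range n).filter fun q : ℕ × ℕ =>
      bowenDist (f^[k]) m ((f^[k])^[q.1] (f^[h] x)) ((f^[k])^[q.2] (f^[h] x)) ≤ ε with hA_def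
    set B := (Finset.range (n + 1) ×ˢ Finset.range (n + 1)).filter fun q : ℕ × ℕ =>
      bowenDist (f^[k]) m ((f^[k])^[q.1] x) ((f^[k])^[q.2] x) ≤ η with hB_def
    have hcard : A.card ≤ B.card := by
      apply Finset.card_le_card_of_injOn (fun q => (q.1 + 1, q.2 + 1))
      · intro q hq
        simp only [hA_def, hB_def, Finset.mem_coe, Finset.mem_filter, Finset.mem_product,
          Finset.mem_range] at hq ⊢
        refine ⟨⟨by omega, by omega⟩, ?_⟩
        rw [key x q.1, key x q.2]
        exact step _ _ hq.2
      · intro a _ b _ hab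
        simp only [Prod.mk.injEq] at hab
        exact Prod.ext (by omega) (by omega)
    have hBle : (B.card : ℝ) ≤ ((n : ℝ) + 1) ^ 2 := by
      have : B.card ≤ (n + 1) * (n + 1) := by
        calc B.card ≤ ((Finset.range (n + 1)) ×ˢ (Finset.range (n + 1))).card :=
              Finset.card_filter_le _ _
          _ = (n + 1) * (n + 1) := by simp [Finset.card_product]
      calc (B.card : ℝ) ≤ ((n : ℝ) + 1) * ((n : ℝ) + 1) := by exact_mod_cast this
        _ = ((n : ℝ) + 1) ^ 2 := by ring
    have hN : (1 : ℝ) ≤ (n : ℝ) := by exact_mod_cast hn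
    have hNpos : (0 : ℝ) < (n : ℝ) := by linarith
    have hb0 : (0 : ℝ) ≤ (B.card : ℝ) := Nat.cast_nonneg _
    have goal_eq1 : corrSum (f^[k]) m (f^[h] x) n ε = (A.card : ℝ) / (n : ℝ) ^ 2 := rfl
    have goal_eq2 : corrSum (f^[k]) m x (n + 1) η = (B.card : ℝ) / ((n : ℝ) + 1) ^ 2 := by
      simp only [corrSum, hB_def]
      push_cast
      ring_nf
    rw [goal_eq1, goal_eq2]
    have h1 : (A.card : ℝ) / (n : ℝ) ^ 2 ≤ (B.card : ℝ) / (n : ℝ) ^ 2 := by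
      apply div_le_div_of_nonneg_right _ (by positivity)
      exact_mod_cast hcard
    refine le_trans h1 ?_
    rw [div_add_div _ _ (by positivity) (by positivity),
      div_le_div_iff₀ (by positivity) (by positivity)]
    clear h1 goal_eq1 goal_eq2
    have h2n : 2 * (n : ℝ) + 1 ≤ 3 * (n : ℝ) := by linarith
    have hkey : (B.card : ℝ) * (2 * (n : ℝ) + 1) ≤ ((n : ℝ) + 1) ^ 2 * (3 * (n : ℝ)) :=
      mul_le_mul hBle h2n (by positivity) (by positivity)
    nlinarith [mul_le_mul_of_nonneg_right hkey hNpos.le]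
end

section
/- Let (X,ρ) be a compact metric space, f : X → X continuous, and p ≥ 2. Suppose X₀, …, X_{p−1} ⊆ X form a strict p-horseshoe for f, i.e., they are nonempty, closed, pairwise disjoint, and f(X_i) ⊇ X₀ ∪ … ∪ X_{p−1} for every 0 ≤ i < p. Then there is a nonempty closed f-invariant set Y ⊆ X with f(Y) = Y and a continuous surjection π : Y → Σ_p satisfying π ∘ f = σ ∘ π, where (Σ_p, σ) is the one-sided full shift on p symbols. -/
open Filter Topology Set

/-- The one-sided full shift map `σ` on `Σ_p = {0,…,p−1}^{ℕ₀}`. -/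
def shiftMap (p : ℕ) : (ℕ → Fin p) → (ℕ → Fin p) := fun x n => x (n + 1)

/-- The metric `d(x,y) = 2^{-min{i : x_i ≠ y_i}}` on `Σ_p`
(`PiNat.dist x y = (1/2) ^ PiNat.firstDiff x y` for `x ≠ y`). -/
noncomputable instance fullShiftMetric (p : ℕ) : MetricSpace (ℕ → Fin p) := PiNat.metricSpace

/-!
The invariant set is `Y = ⋂ₙ f⁻ⁿ(X₀ ∪ ⋯ ∪ X_{p−1})` and `π` sends a point to its itinerary, the
sequence of pieces its forward orbit visits. Because each `f(Xᵢ)` covers every piece, any finite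
prescribed itinerary is realised by pulling back step by step, and compactness turns the nested
closed sets of such points into a point with a prescribed infinite itinerary: this makes `π`
surjective. Disjointness makes the itinerary well defined, and since the pieces are closed and
finitely many, each coordinate of `π` is locally constant.
-/

theorem continuous_of_isClosed_preimage_singleton {Z ι : Type*} [TopologicalSpace Z]
    [TopologicalSpace ι] [DiscreteTopology ι] [Finite ι] {g : Z → ι}
    (h : ∀ i, IsClosed (g ⁻¹' {i})) : Continuous g :=
  continuous_iff_isClosed.2 fun s _ => by
    rw [← biUnion_preimage_singleton]
    exact s.toFinite.isClosed_biUnion fun i _ => h i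

section MaxInvariantSubset

variable {X : Type*} (f : X → X) (U : Set X)

/-- The largest subset `S ⊆ U` with `f '' S ⊆ S`. -/
def maxInvariantSubset : Set X := ⋂ n, f^[n] ⁻¹' U

variable {f U}

@[simp]
theorem mem_maxInvariantSubset {x : X} : x ∈ maxInvariantSubset f U ↔ ∀ n, f^[n] x ∈ U := by
  simp [maxInvariantSubset]

theorem isClosed_maxInvariantSubset [TopologicalSpace X] (hf : Continuous f) (hU : IsClosed U) :
    IsClosed (maxInvariantSubset f U) :=
  isClosed_iInter fun n => hU.preimage (hf.iterate n)

theorem image_maxInvariantSubset (hU : U ⊆ f '' U) :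
    f '' maxInvariantSubset f U = maxInvariantSubset f U := by
  refine Subset.antisymm ?_ fun y hy => ?_
  · rintro _ ⟨x, hx, rfl⟩
    simpa only [mem_maxInvariantSubset, ← Function.iterate_succ_apply] using
      fun n => mem_maxInvariantSubset.1 hx (n + 1)
  · obtain ⟨x, hxU, rfl⟩ := hU (mem_maxInvariantSubset.1 hy 0)
    refine ⟨x, mem_maxInvariantSubset.2 fun n => ?_, rfl⟩
    cases n with
    | zero => exact hxU
    | succ n => simpa only [Function.iterate_succ_apply] using mem_maxInvariantSubset.1 hy n

end MaxInvariantSubset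

section Horseshoe

open Function

variable {X ι : Type*} {f : X → X} {Xs : ι → Set X}

theorem exists_forall_le_iterate_mem (hne : ∀ i, (Xs i).Nonempty)
    (hcover : ∀ i, (⋃ j, Xs j) ⊆ f '' Xs i) (n : ℕ) (ω : ℕ → ι) :
    ∃ x, ∀ k ≤ n, f^[k] x ∈ Xs (ω k) := by
  induction n generalizing ω with
  | zero =>
    obtain ⟨x, hx⟩ := hne (ω 0)
    exact ⟨x, fun k hk => by rwa [Nat.le_zero.1 hk]⟩
  | succ n ih =>
    obtain ⟨y, hy⟩ := ih (ω ∘ Nat.succ)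
    obtain ⟨x, hx, rfl⟩ := hcover (ω 0) (mem_iUnion_of_mem _ (hy 0 n.zero_le))
    refine ⟨x, fun k hk => ?_⟩
    cases k with
    | zero => exact hx
    | succ k => exact iterate_succ_apply f k x ▸ hy k (Nat.succ_le_succ_iff.1 hk)

theorem exists_forall_iterate_mem [TopologicalSpace X] [CompactSpace X] (hf : Continuous f)
    (hcl : ∀ i, IsClosed (Xs i)) (hne : ∀ i, (Xs i).Nonempty)
    (hcover : ∀ i, (⋃ j, Xs j) ⊆ f '' Xs i) (ω : ℕ → ι) :
    ∃ x, ∀ k, f^[k] x ∈ Xs (ω k) := by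
  let F : ℕ → Set X := fun n => ⋂ k ≤ n, f^[k] ⁻¹' Xs (ω k)
  have hF_closed (n : ℕ) : IsClosed (F n) :=
    isClosed_biInter fun k _ => (hcl _).preimage (hf.iterate k)
  have hF_nonempty (n : ℕ) : (F n).Nonempty := by
    obtain ⟨x, hx⟩ := exists_forall_le_iterate_mem hne hcover n ω
    exact ⟨x, mem_iInter₂.2 hx⟩
  have hF_anti (n : ℕ) : F (n + 1) ⊆ F n :=
    biInter_subset_biInter_left fun k hk => Nat.le_succ_of_le hk
  obtain ⟨x, hx⟩ := IsCompact.nonempty_iInter_of_sequence_nonempty_isCompact_isClosed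
    F hF_anti hF_nonempty (hF_closed 0).isCompact hF_closed
  exact ⟨x, fun k => mem_iInter₂.1 (mem_iInter.1 hx k) k le_rfl⟩

variable (f Xs) in
noncomputable def itinerary (y : maxInvariantSubset f (⋃ i, Xs i)) (n : ℕ) : ι :=
  (mem_iUnion.1 (mem_maxInvariantSubset.1 y.2 n)).choose

theorem iterate_mem_itinerary (y : maxInvariantSubset f (⋃ i, Xs i)) (n : ℕ) :
    f^[n] y ∈ Xs (itinerary f Xs y n) :=
  (mem_iUnion.1 (mem_maxInvariantSubset.1 y.2 n)).choose_spec

theorem itinerary_eq_of_iterate_mem (hdisj : Pairwise (Disjoint on Xs))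
    {y : maxInvariantSubset f (⋃ i, Xs i)} {n : ℕ} {i : ι} (h : f^[n] y ∈ Xs i) :
    itinerary f Xs y n = i := by
  by_contra hne
  exact (hdisj hne).ne_of_mem (iterate_mem_itinerary y n) h rfl

theorem continuous_itinerary [TopologicalSpace X] [TopologicalSpace ι] [DiscreteTopology ι]
    [Finite ι] (hf : Continuous f) (hcl : ∀ i, IsClosed (Xs i))
    (hdisj : Pairwise (Disjoint on Xs)) :
    Continuous (itinerary f Xs) := by
  refine continuous_pi fun n => continuous_of_isClosed_preimage_singleton fun i => ?_
  have hfiber : (itinerary f Xs · n) ⁻¹' {i} = (f^[n] ∘ (↑)) ⁻¹' Xs i := by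
    ext y
    exact ⟨fun h => h ▸ iterate_mem_itinerary y n, itinerary_eq_of_iterate_mem hdisj⟩
  rw [hfiber]
  exact (hcl i).preimage ((hf.iterate n).comp continuous_subtype_val)

theorem itinerary_surjective [TopologicalSpace X] [CompactSpace X] (hf : Continuous f)
    (hcl : ∀ i, IsClosed (Xs i)) (hne : ∀ i, (Xs i).Nonempty)
    (hdisj : Pairwise (Disjoint on Xs)) (hcover : ∀ i, (⋃ j, Xs j) ⊆ f '' Xs i) :
    Function.Surjective (itinerary f Xs) := fun ω => by
  obtain ⟨x, hx⟩ := exists_forall_iterate_mem hf hcl hne hcover ω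
  exact ⟨⟨x, mem_maxInvariantSubset.2 fun n => mem_iUnion_of_mem _ (hx n)⟩,
    funext fun n => itinerary_eq_of_iterate_mem hdisj (hx n)⟩

theorem itinerary_apply_map (hdisj : Pairwise (Disjoint on Xs)) {y : X}
    (hy : y ∈ maxInvariantSubset f (⋃ i, Xs i))
    (hfy : f y ∈ maxInvariantSubset f (⋃ i, Xs i)) (n : ℕ) :
    itinerary f Xs ⟨f y, hfy⟩ n = itinerary f Xs ⟨y, hy⟩ (n + 1) :=
  itinerary_eq_of_iterate_mem hdisj <| by
    simpa only [← iterate_succ_apply] using iterate_mem_itinerary ⟨y, hy⟩ (n + 1)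

end Horseshoe

/-- If `X₀,…,X_{p−1}` form a strict `p`-horseshoe for `f`, then `f` has a subsystem `(Y,f)`
which is a topological extension of the full shift `(Σ_p,σ)`. -/
theorem horseshoe_extension_of_full_shift {X : Type*} [MetricSpace X] [CompactSpace X]
    (f : X → X) (hf : Continuous f) (p : ℕ) (hp : 2 ≤ p)
    (Xs : Fin p → Set X) (hne : ∀ i, (Xs i).Nonempty) (hcl : ∀ i, IsClosed (Xs i))
    (hdisj : ∀ i j, i ≠ j → Disjoint (Xs i) (Xs j))
    (hcover : ∀ i, (⋃ j, Xs j) ⊆ f '' Xs i) :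
    ∃ Y : Set X, Y.Nonempty ∧ IsClosed Y ∧ f '' Y = Y ∧
      ∃ π : Y → (ℕ → Fin p), Continuous π ∧ Function.Surjective π ∧
        ∀ (y : X) (hy : y ∈ Y) (hfy : f y ∈ Y),
          π ⟨f y, hfy⟩ = shiftMap p (π ⟨y, hy⟩) := by
  have hdisj' : Pairwise fun i j => Disjoint (Xs i) (Xs j) := fun i j => hdisj i j
  have hsurj := itinerary_surjective hf hcl hne hdisj' hcover
  have i₀ : Fin p := ⟨0, by omega⟩
  refine ⟨_, (hsurj fun _ => i₀).elim fun y _ => ⟨y, y.2⟩,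
    isClosed_maxInvariantSubset hf (isClosed_iUnion_of_finite hcl),
    image_maxInvariantSubset ((hcover i₀).trans (image_mono (subset_iUnion _ _))),
    itinerary f Xs, continuous_itinerary hf hcl hdisj', hsurj,
    fun y hy hfy => funext (itinerary_apply_map hdisj' hy hfy)⟩
end
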